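/- arXiv:0804.2869 — 4 statements merged into one kernel-verified Lean document; each statement's English description precedes it below -/
import Mathlib

section
/- Let X and Δ be N×N complex matrices. The function t ↦ exp(X + t·Δ) (matrix exponential) is differentiable at t = 0, with derivative equal to exp(X) · ∫₀¹ exp(−s·X) · Δ · exp(s·X) ds. Equivalently, exp(X+Δ) = exp(X)·(1 + ∫₀¹ exp(−sX) Δ exp(sX) ds) + O(Δ²). -/
/-!
Duhamel's formula: differentiating `s ↦ exp (-s • A) * exp (s • B)` gives
`exp (-s • A) * (B - A) * exp (s • B)`, so integrating over `[0, 1]` yields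
`exp B - exp A = exp A * ∫₀¹ exp (-s • A) * (B - A) * exp (s • B) ds`.
With `B = X + t • Δ` this writes `exp (X + t • Δ) - exp X` as `t` times a function of `t`
that is continuous by parametric continuity of integrals; its value at `t = 0` is the derivative.
-/

open scoped Matrix
open NormedSpace

attribute [local instance] Matrix.linftyOpNormedAddCommGroup Matrix.linftyOpNormedRing
  Matrix.linftyOpNormedAlgebra Matrix.instCompleteSpace

theorem hasDerivAt_of_sub_eq_smul {𝕜 E : Type*} [NontriviallyNormedField 𝕜]
    [NormedAddCommGroup E] [NormedSpace 𝕜 E] {f g : 𝕜 → E} {x : 𝕜}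
    (hfg : ∀ t, f t - f x = (t - x) • g t) (hg : ContinuousAt g x) :
    HasDerivAt f (g x) x := by
  refine hasDerivAt_iff_tendsto_slope.mpr <|
    (hg.tendsto.mono_left nhdsWithin_le_nhds).congr' ?_
  filter_upwards [self_mem_nhdsWithin] with t (ht : t ≠ x)
  rw [slope_def_module, hfg, smul_smul, inv_mul_cancel₀ (sub_ne_zero.mpr ht), one_smul]

section Duhamel

variable {𝔸 : Type*} [NormedRing 𝔸] [NormedAlgebra ℝ 𝔸] [CompleteSpace 𝔸]

theorem hasDerivAt_exp_neg_smul_mul_exp_smul (A B : 𝔸) (s : ℝ) :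
    HasDerivAt (fun u : ℝ => exp ((-u) • A) * exp (u • B))
      (exp ((-s) • A) * (B - A) * exp (s • B)) s := by
  have hA : HasDerivAt (fun u : ℝ => exp ((-u) • A)) ((-1 : ℝ) • (exp ((-s) • A) * A)) s :=
    (hasDerivAt_exp_smul_const A (-s)).scomp s (hasDerivAt_neg s)
  refine (hA.mul (hasDerivAt_exp_smul_const' B s)).congr_deriv ?_
  rw [neg_one_smul]
  noncomm_ring

theorem exp_neg_mul_exp_sub_one_eq_integral (A B : 𝔸) :
    exp (-A) * exp B - 1 = ∫ s in (0 : ℝ)..1, exp ((-s) • A) * (B - A) * exp (s • B) := by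
  let +nondep : NormedAlgebra ℚ 𝔸 := NormedAlgebra.restrictScalars ℚ ℝ 𝔸
  have hcont : Continuous fun s : ℝ => exp ((-s) • A) * (B - A) * exp (s • B) := by
    fun_prop
  rw [intervalIntegral.integral_eq_sub_of_hasDerivAt
    (fun s _ => hasDerivAt_exp_neg_smul_mul_exp_smul A B s) (hcont.intervalIntegrable 0 1)]
  simp

theorem exp_sub_exp_eq_mul_integral (A B : 𝔸) :
    exp B - exp A =
      exp A * ∫ s in (0 : ℝ)..1, exp ((-s) • A) * (B - A) * exp (s • B) := by
  let +nondep : NormedAlgebra ℚ 𝔸 := NormedAlgebra.restrictScalars ℚ ℝ 𝔸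
  have hinv : exp A * exp (-A) = 1 := by
    rw [← exp_add_of_commute (Commute.refl A).neg_right, add_neg_cancel, exp_zero]
  rw [← exp_neg_mul_exp_sub_one_eq_integral, mul_sub, ← mul_assoc, hinv, one_mul, mul_one]

theorem hasDerivAt_exp_add_smul (X Δ : 𝔸) :
    HasDerivAt (fun t : ℝ => exp (X + t • Δ))
      (exp X * ∫ s in (0 : ℝ)..1, exp ((-s) • X) * Δ * exp (s • X)) 0 := by
  let +nondep : NormedAlgebra ℚ 𝔸 := NormedAlgebra.restrictScalars ℚ ℝ 𝔸
  set H : ℝ → 𝔸 := fun t =>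
    exp X * ∫ s in (0 : ℝ)..1, exp ((-s) • X) * Δ * exp (s • (X + t • Δ))
  have hH : Continuous H := by
    refine continuous_const.mul <|
      intervalIntegral.continuous_parametric_intervalIntegral_of_continuous' ?_ 0 1
    fun_prop
  have hdiff : ∀ t, exp (X + t • Δ) - exp (X + (0 : ℝ) • Δ) = (t - 0) • H t := by
    intro t
    rw [zero_smul, add_zero, sub_zero, exp_sub_exp_eq_mul_integral, add_sub_cancel_left]
    simp only [H, mul_smul_comm, smul_mul_assoc, intervalIntegral.integral_smul]
  simpa [H] using hasDerivAt_of_sub_eq_smul hdiff hH.continuousAt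

end Duhamel

theorem hasDerivAt_exp_perturbation_general (N : ℕ)
    (X Δ : Matrix (Fin N) (Fin N) ℂ) :
    HasDerivAt (fun t : ℝ => exp (X + t • Δ))
      (exp X *
        ∫ s in (0:ℝ)..1, exp ((-(s : ℂ)) • X) * Δ * exp ((s : ℂ) • X))
      0 := by
  simp_rw [← Complex.ofReal_neg, Complex.coe_smul]
  exact hasDerivAt_exp_add_smul X Δ

/-- For `N × N` complex matrices `X` and `Δ` (`N ≥ 1`), the function
`t ↦ exp (X + t • Δ)` is differentiable at `t = 0`, with derivative
`exp X * ∫₀¹ exp (−s • X) * Δ * exp (s • X) ds`. -/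
theorem hasDerivAt_exp_perturbation (N : ℕ) (hN : 1 ≤ N)
    (X Δ : Matrix (Fin N) (Fin N) ℂ) :
    HasDerivAt (fun t : ℝ => exp (X + t • Δ))
      (exp X *
        ∫ s in (0:ℝ)..1, exp ((-(s : ℂ)) • X) * Δ * exp ((s : ℂ) • X))
      0 :=
  hasDerivAt_exp_perturbation_general N X Δ
end

section
/- Let X be an N×N complex matrix diagonalized as A = S·X·S⁻¹ with A = diag(λ₁,…,λ_N), where the eigenvalues are pairwise distinct, so r_{ij} := λ_i − λ_j ≠ 0 for all i ≠ j. Let Δ be any N×N complex matrix, with Δ₀ and Δ_{(i,j)} defined via B = S·Δ·S⁻¹ as its commuting diagonal component and off-diagonal components. Then for every natural number n ≥ 1, the function t ↦ (X + t·Δ)^n has derivative at t = 0 equal to n·X^{n−1}·Δ₀ + Σ_{i≠j} r_{ij}⁻¹ · (X^n − (X − r_{ij}·I)^n) · Δ_{(i,j)}, where I is the identity matrix. -/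
open scoped Matrix

attribute [local instance] Matrix.linftyOpNormedAddCommGroup Matrix.linftyOpNormedRing
  Matrix.linftyOpNormedAlgebra Matrix.instCompleteSpace

/-!
The derivative of `t ↦ (X + t • Δ) ^ n` at `0` is `∑ᵢ X ^ (n - 1 - i) * Δ * X ^ i`, which is
additive in `Δ`. In the eigenbasis of `X`, the diagonal part `Δ₀` commutes with `X`, so each
summand is `X ^ (n - 1) * Δ₀`. Each off-diagonal piece `D = Δ_{(i,j)}` satisfies
`X * D = λᵢ • D` and `D * X = λⱼ • D`, so its summands add up to the geometric sum
`(λᵢ ^ n - λⱼ ^ n) / (λᵢ - λⱼ) • D`; since `X - r_{ij} • 1` acts on `D` from the left as `λⱼ`,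
this is the stated term.
-/

open Finset Matrix

theorem hasDerivAt_add_smul_pow {𝕜 𝔸 : Type*} [NontriviallyNormedField 𝕜] [NormedRing 𝔸]
    [NormedAlgebra 𝕜 𝔸] (X D : 𝔸) (n : ℕ) :
    HasDerivAt (fun t : 𝕜 => (X + t • D) ^ n)
      (∑ i ∈ range n, X ^ (n - 1 - i) * D * X ^ i) 0 := by
  simpa using (((hasDerivAt_id (0 : 𝕜)).smul_const D).const_add X).fun_pow' n

section Semiring

variable {R : Type*} [Semiring R]

theorem sum_pow_mul_mul_pow_of_commute {X D : R} (h : Commute X D) (n : ℕ) :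
    ∑ i ∈ range n, X ^ (n - 1 - i) * D * X ^ i = n • (X ^ (n - 1) * D) := by
  have hterm : ∀ i ∈ range n, X ^ (n - 1 - i) * D * X ^ i = X ^ (n - 1) * D := by
    intro i hi
    rw [mul_assoc, ← (h.pow_left i).eq, ← mul_assoc, ← pow_add,
      Nat.sub_add_cancel (by have := mem_range.mp hi; omega)]
  rw [sum_congr rfl hterm, sum_const, card_range]

variable {K : Type*} [CommSemiring K] [Algebra K R]

theorem pow_mul_eq_smul_of_mul_eq_smul {X D : R} {a : K} (h : X * D = a • D) (m : ℕ) :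
    X ^ m * D = a ^ m • D := by
  induction m with
  | zero => simp
  | succ m ih => rw [pow_succ', mul_assoc, ih, mul_smul_comm, h, smul_smul, ← pow_succ]

theorem mul_pow_eq_smul_of_mul_eq_smul {X D : R} {b : K} (h : D * X = b • D) (m : ℕ) :
    D * X ^ m = b ^ m • D := by
  induction m with
  | zero => simp
  | succ m ih => rw [pow_succ, ← mul_assoc, ih, smul_mul_assoc, h, smul_smul, ← pow_succ]

theorem sum_pow_mul_mul_pow_of_mul_eq_smul {X D : R} {a b : K} (ha : X * D = a • D)
    (hb : D * X = b • D) (n : ℕ) :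
    ∑ i ∈ range n, X ^ (n - 1 - i) * D * X ^ i =
      (∑ i ∈ range n, a ^ (n - 1 - i) * b ^ i) • D := by
  simp only [pow_mul_eq_smul_of_mul_eq_smul ha, smul_mul_assoc,
    mul_pow_eq_smul_of_mul_eq_smul hb, smul_smul, sum_smul]

end Semiring

section Field

variable {K R : Type*} [Field K] [Ring R] [Algebra K R]

theorem sum_pow_mul_mul_pow_of_mul_eq_smul_of_ne {X D : R} {a b : K} (ha : X * D = a • D)
    (hb : D * X = b • D) (hab : a ≠ b) (n : ℕ) :
    ∑ i ∈ range n, X ^ (n - 1 - i) * D * X ^ i =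
      (a - b)⁻¹ • ((X ^ n - (X - (a - b) • 1) ^ n) * D) := by
  have hshift : (X - (a - b) • 1) * D = b • D := by
    rw [sub_mul, ha, smul_one_mul, ← sub_smul, sub_sub_cancel]
  have hgeom : (∑ i ∈ range n, a ^ (n - 1 - i) * b ^ i) * (a - b) = a ^ n - b ^ n := by
    rw [← geom_sum₂_mul, geom_sum₂_comm]
    simp only [mul_comm]
  rw [sub_mul, pow_mul_eq_smul_of_mul_eq_smul ha, pow_mul_eq_smul_of_mul_eq_smul hshift,
    ← sub_smul, smul_smul, sum_pow_mul_mul_pow_of_mul_eq_smul ha hb, ← hgeom,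
    mul_comm, mul_inv_cancel_right₀ (sub_ne_zero.mpr hab)]

theorem sum_pow_mul_mul_pow_of_commute_add_sum_eigen {ι : Type*} {X D₀ : R} {s : Finset ι}
    {D : ι → R} {a b : ι → K} (h₀ : Commute X D₀) (ha : ∀ p ∈ s, X * D p = a p • D p)
    (hb : ∀ p ∈ s, D p * X = b p • D p) (hab : ∀ p ∈ s, a p ≠ b p) (n : ℕ) :
    ∑ i ∈ range n, X ^ (n - 1 - i) * (D₀ + ∑ p ∈ s, D p) * X ^ i =
      (n : K) • (X ^ (n - 1) * D₀) +
        ∑ p ∈ s, (a p - b p)⁻¹ • ((X ^ n - (X - (a p - b p) • 1) ^ n) * D p) := by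
  simp only [mul_add, add_mul, mul_sum, sum_mul, sum_add_distrib]
  rw [sum_comm, sum_pow_mul_mul_pow_of_commute h₀, Nat.cast_smul_eq_nsmul]
  exact congrArg _ <| sum_congr rfl fun p hp =>
    sum_pow_mul_mul_pow_of_mul_eq_smul_of_ne (ha p hp) (hb p hp) (hab p hp) n

end Field

namespace Matrix

variable {ι K : Type*} [Fintype ι] [DecidableEq ι]

theorem diagonal_mul_single [CommSemiring K] (d : ι → K) (i j : ι) (c : K) :
    diagonal d * single i j c = d i • single i j c := by
  ext a b
  by_cases h : i = a <;> simp [diagonal_mul, single_apply, h]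

theorem single_mul_diagonal [CommSemiring K] (d : ι → K) (i j : ι) (c : K) :
    single i j c * diagonal d = d j • single i j c := by
  ext a b
  by_cases h : j = b <;> simp [mul_diagonal, single_apply, h, mul_comm]

theorem eq_diagonal_add_sum_single_offDiag [AddCommMonoid K] (M : Matrix ι ι K) :
    M = diagonal (fun i => M i i) +
      ∑ p ∈ univ.filter (fun p : ι × ι => p.1 ≠ p.2), single p.1 p.2 (M p.1 p.2) := by
  ext a b
  have hsingle : ∀ p : ι × ι,
      single p.1 p.2 (M p.1 p.2) a b = if p = (a, b) then M a b else 0 := by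
    rintro ⟨i, j⟩
    simp only [single_apply, Prod.mk.injEq]
    split_ifs <;> simp_all
  by_cases h : a = b
  · subst h
    simp [Matrix.sum_apply, hsingle]
  · simp [Matrix.sum_apply, hsingle, h]

theorem exists_algEquiv_eq_inv_mul_mul [CommRing K] {S : Matrix ι ι K} (hS : IsUnit S.det) :
    ∃ φ : Matrix ι ι K ≃ₐ[K] Matrix ι ι K, ∀ M, φ M = S⁻¹ * M * S :=
  ⟨MulSemiringAction.toAlgEquiv K _ (ConjAct.toConjAct (S.nonsingInvUnit hS)⁻¹), fun M => by
    simp [ConjAct.units_smul_def, nonsingInvUnit]⟩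

end Matrix

theorem hasDerivAt_pow_perturbation_general (N : ℕ) (X Δ S : Matrix (Fin N) (Fin N) ℂ)
    (hS : IsUnit S.det) (lam : Fin N → ℂ)
    (hdiag : S * X * S⁻¹ = Matrix.diagonal lam)
    (hdistinct : ∀ i j : Fin N, i ≠ j → lam i ≠ lam j)
    (r : Fin N → Fin N → ℂ) (hr : ∀ i j, r i j = lam i - lam j)
    (B B₀ Δ₀ : Matrix (Fin N) (Fin N) ℂ)
    (hB : B = S * Δ * S⁻¹)
    (hB₀ : B₀ = Matrix.diagonal (fun i => B i i))
    (hΔ₀ : Δ₀ = S⁻¹ * B₀ * S)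
    (Δoff : Fin N → Fin N → Matrix (Fin N) (Fin N) ℂ)
    (hΔoff : ∀ i j, i ≠ j →
      Δoff i j = S⁻¹ * (B i j • Matrix.single i j (1 : ℂ)) * S)
    (n : ℕ) :
    HasDerivAt (fun t : ℝ => (X + t • Δ) ^ n)
      ((n : ℂ) • (X ^ (n - 1) * Δ₀) +
        ∑ p ∈ Finset.univ.filter (fun p : Fin N × Fin N => p.1 ≠ p.2),
          (r p.1 p.2)⁻¹ •
            ((X ^ n - (X - r p.1 p.2 • (1 : Matrix (Fin N) (Fin N) ℂ)) ^ n) *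
              Δoff p.1 p.2))
      0 := by
  obtain ⟨φ, hφ⟩ := exists_algEquiv_eq_inv_mul_mul hS
  have hφ_conj : ∀ M, φ (S * M * S⁻¹) = M := fun M => by
    rw [hφ]
    simp only [mul_assoc, nonsing_inv_mul_cancel_left S _ hS, nonsing_inv_mul S hS, mul_one]
  have hX : X = φ (diagonal lam) := by rw [← hdiag, hφ_conj]
  set F := univ.filter (fun p : Fin N × Fin N => p.1 ≠ p.2)
  have hΔ₀φ : Δ₀ = φ (diagonal fun i => B i i) := by rw [hΔ₀, hB₀, hφ]
  have hΔoffφ : ∀ p ∈ F, Δoff p.1 p.2 = φ (single p.1 p.2 (B p.1 p.2)) := fun p hp => by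
    rw [hΔoff _ _ (mem_filter.mp hp).2, hφ, smul_single, smul_eq_mul, mul_one]
  have hΔ : Δ = Δ₀ + ∑ p ∈ F, Δoff p.1 p.2 := by
    rw [hΔ₀φ, sum_congr rfl hΔoffφ, ← map_sum, ← map_add, ← eq_diagonal_add_sum_single_offDiag,
      hB, hφ_conj]
  simp only [hr]
  refine (hasDerivAt_add_smul_pow X Δ n).congr_deriv ?_
  rw [hΔ]
  refine sum_pow_mul_mul_pow_of_commute_add_sum_eigen ?_ (fun p hp => ?_) (fun p hp => ?_)
    (fun p hp => hdistinct _ _ (mem_filter.mp hp).2) n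
  · rw [hX, hΔ₀φ]
    exact (commute_diagonal _ _).map φ
  · rw [hX, hΔoffφ p hp, ← map_mul, diagonal_mul_single, map_smul]
  · rw [hX, hΔoffφ p hp, ← map_mul, single_mul_diagonal, map_smul]

/-- Let `S * X * S⁻¹ = diag(λ₁,…,λ_N)` with pairwise distinct
eigenvalues (`S` invertible), let `Δ` be arbitrary, and define `B = S * Δ * S⁻¹`,
`Δ₀ = S⁻¹ * B₀ * S` (with `B₀` the diagonal part of `B`) and
`Δ_{(i,j)} = S⁻¹ * (B i j • E_{ij}) * S` for `i ≠ j`.  Then for every `n ≥ 1`, the map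
`t ↦ (X + t • Δ)^n` has derivative at `t = 0` equal to
`n • X^(n−1) * Δ₀ + ∑_{i≠j} r_{ij}⁻¹ • ((X^n − (X − r_{ij}•1)^n) * Δ_{(i,j)})`. -/
theorem hasDerivAt_pow_perturbation (N : ℕ) (X Δ S : Matrix (Fin N) (Fin N) ℂ)
    (hS : IsUnit S.det) (lam : Fin N → ℂ)
    (hdiag : S * X * S⁻¹ = Matrix.diagonal lam)
    (hdistinct : ∀ i j : Fin N, i ≠ j → lam i ≠ lam j)
    (r : Fin N → Fin N → ℂ) (hr : ∀ i j, r i j = lam i - lam j)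
    (B B₀ Δ₀ : Matrix (Fin N) (Fin N) ℂ)
    (hB : B = S * Δ * S⁻¹)
    (hB₀ : B₀ = Matrix.diagonal (fun i => B i i))
    (hΔ₀ : Δ₀ = S⁻¹ * B₀ * S)
    (Δoff : Fin N → Fin N → Matrix (Fin N) (Fin N) ℂ)
    (hΔoff : ∀ i j, i ≠ j →
      Δoff i j = S⁻¹ * (B i j • Matrix.single i j (1 : ℂ)) * S)
    (n : ℕ) (hn : 1 ≤ n) :
    HasDerivAt (fun t : ℝ => (X + t • Δ) ^ n)
      ((n : ℂ) • (X ^ (n - 1) * Δ₀) +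
        ∑ p ∈ Finset.univ.filter (fun p : Fin N × Fin N => p.1 ≠ p.2),
          (r p.1 p.2)⁻¹ •
            ((X ^ n - (X - r p.1 p.2 • (1 : Matrix (Fin N) (Fin N) ℂ)) ^ n) *
              Δoff p.1 p.2))
      0 :=
  hasDerivAt_pow_perturbation_general N X Δ S hS lam hdiag hdistinct r hr B B₀ Δ₀ hB hB₀ hΔ₀ Δoff
    hΔoff n
end

section
/- Let X be an N×N complex matrix diagonalized as A = S·X·S⁻¹ with A = diag(λ₁,…,λ_N), where the eigenvalues are pairwise distinct, so r_{ij} := λ_i − λ_j ≠ 0 for all i ≠ j. Let Δ be any N×N complex matrix, with Δ₀ and Δ_{(i,j)} defined via B = S·Δ·S⁻¹ as its commuting diagonal component and off-diagonal components. Then for every polynomial F over ℂ, the function t ↦ F(X + t·Δ) (polynomial evaluated at the matrix X + t·Δ) has derivative at t = 0 equal to F′(X)·Δ₀ + Σ_{i≠j} r_{ij}⁻¹ · (F(X) − F(X − r_{ij}·I)) · Δ_{(i,j)}, where F′ is the formal derivative of F and I is the identity matrix. -/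
open scoped Matrix
open Polynomial

attribute [local instance] Matrix.linftyOpNormedAddCommGroup Matrix.linftyOpNormedRing
  Matrix.linftyOpNormedAlgebra Matrix.instCompleteSpace

/-!
The derivative of `t ↦ F(X + tΔ)` at `0` is the noncommutative Leibniz expansion
`Δ ↦ ∑ₙ cₙ ∑ₖ X^(n-1-k) Δ X^k`, which is linear in `Δ`. Split `Δ = Δ₀ + ∑ Δ_(i,j)`.
The piece `Δ₀` commutes with `X` and contributes `F′(X) Δ₀`. The piece `Δ_(i,j)` satisfies
`X Δ_(i,j) - Δ_(i,j) X = r_ij Δ_(i,j)`, i.e. `Δ_(i,j) X = (X - r_ij) Δ_(i,j)`; pushing `Δ_(i,j)`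
to the right turns each inner sum into a geometric sum in the commuting pair `X`, `X - r_ij`,
which equals `r_ij⁻¹ (Xⁿ - (X - r_ij)ⁿ)` because `r_ij ≠ 0`.
-/

open Finset

theorem Commute.sum_pow_mul_mul_pow_of_semiconjBy {A : Type*} [Semiring A] {x y e : A}
    (hxy : Commute x y) (he : SemiconjBy e x y) (n : ℕ) :
    ∑ k ∈ range n, x ^ (n - 1 - k) * e * x ^ k = (∑ k ∈ range n, x ^ k * y ^ (n - 1 - k)) * e := by
  rw [hxy.geom_sum₂_comm, Finset.sum_mul]
  refine Finset.sum_congr rfl fun k _ => ?_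
  rw [mul_assoc, (he.pow_right k).eq, ← mul_assoc, (hxy.pow_pow _ _).eq]

namespace Polynomial

variable {R A : Type*}

section Semiring

variable [CommSemiring R] [Semiring A] [Algebra R A]

def derivAeval (F : R[X]) (x : A) : A →ₗ[R] A :=
  F.sum fun n c => c • ∑ k ∈ range n, LinearMap.mulLeftRight R (x ^ (n - 1 - k), x ^ k)

theorem derivAeval_apply (F : R[X]) (x h : A) :
    derivAeval F x h = F.sum fun n c => c • ∑ k ∈ range n, x ^ (n - 1 - k) * h * x ^ k := by
  simp [derivAeval, Polynomial.sum_def]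

theorem aeval_eq_sum_smul (F : R[X]) (x : A) : aeval x F = F.sum fun n c => c • x ^ n := by
  simp [aeval_def, eval₂_eq_sum, Algebra.smul_def]

theorem aeval_derivative_eq_sum (F : R[X]) (x : A) :
    aeval x (derivative F) = F.sum fun n c => c • ((n : A) * x ^ (n - 1)) := by
  simp [derivative_apply, Polynomial.sum_def, map_sum, Algebra.smul_def, mul_assoc]

theorem derivAeval_of_semiconjBy {F : R[X]} {x y e : A} (hxy : Commute x y)
    (he : SemiconjBy e x y) :
    derivAeval F x e = (F.sum fun n c => c • ∑ k ∈ range n, x ^ k * y ^ (n - 1 - k)) * e := by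
  simp only [derivAeval_apply, hxy.sum_pow_mul_mul_pow_of_semiconjBy he, Polynomial.sum_def,
    Finset.sum_mul, smul_mul_assoc]

theorem derivAeval_of_commute {F : R[X]} {x e : A} (he : Commute x e) :
    derivAeval F x e = aeval x (derivative F) * e := by
  simp only [derivAeval_of_semiconjBy (Commute.refl x) he.symm, geom_sum₂_self,
    aeval_derivative_eq_sum]

end Semiring

theorem smul_derivAeval_of_mul_sub_mul_eq_smul [CommRing R] [Ring A] [Algebra R A] {F : R[X]}
    {x e : A} {r : R} (he : x * e - e * x = r • e) :
    r • derivAeval F x e = (aeval x F - aeval (x - r • 1) F) * e := by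
  have hxy : Commute x (x - r • 1) :=
    (Commute.refl x).sub_right ((Commute.one_right x).smul_right r)
  have hsemi : SemiconjBy e x (x - r • 1) := by
    rw [SemiconjBy, sub_mul, smul_mul_assoc, one_mul, ← he]
    abel
  rw [derivAeval_of_semiconjBy hxy hsemi, ← smul_mul_assoc]
  congr 1
  rw [aeval_eq_sum_smul, aeval_eq_sum_smul, Polynomial.sum_def, Polynomial.sum_def,
    Polynomial.sum_def, Finset.smul_sum, ← Finset.sum_sub_distrib]
  refine Finset.sum_congr rfl fun n _ => ?_
  rw [smul_comm, ← smul_sub, ← hxy.mul_geom_sum₂, sub_sub_cancel, smul_mul_assoc, one_mul]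

theorem hasDerivAt_aeval_add_smul {𝕜 : Type*} [NontriviallyNormedField 𝕜] [CommSemiring R]
    [NormedRing A] [NormedAlgebra 𝕜 A] [Algebra R A] (F : R[X]) (x h : A) :
    HasDerivAt (fun t : 𝕜 => aeval (x + t • h) F) (derivAeval F x h) 0 := by
  have hline : HasDerivAt (fun t : 𝕜 => x + t • h) h 0 := by
    simpa using ((hasDerivAt_id (0 : 𝕜)).smul_const h).const_add x
  have hpow (n : ℕ) : HasDerivAt (fun t : 𝕜 => (x + t • h) ^ n)
      (∑ k ∈ range n, x ^ (n - 1 - k) * h * x ^ k) 0 := by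
    simpa [mul_assoc] using (hline.hasFDerivAt.fun_pow' n).hasDerivAt
  simp only [aeval_eq_sum_smul, derivAeval_apply, Polynomial.sum_def, Algebra.smul_def (R := R)]
  exact HasDerivAt.fun_sum fun n _ => (hpow n).const_mul _

end Polynomial

namespace Matrix

variable {n α : Type*} [Fintype n] [DecidableEq n]

theorem eq_diagonal_add_sum_offDiag_single [Semiring α] (B : Matrix n n α) :
    B = diagonal (fun i => B i i) +
      ∑ p ∈ univ.filter (fun p : n × n => p.1 ≠ p.2), B p.1 p.2 • single p.1 p.2 1 := by
  ext a b
  have hpair (p : n × n) : (p.1 = a ∧ p.2 = b) ↔ p = (a, b) := by simp [Prod.ext_iff]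
  by_cases hab : a = b
  · subst hab
    simp [Matrix.sum_apply, single_apply, hpair]
  · simp [Matrix.sum_apply, single_apply, hab, hpair]

theorem diagonal_mul_single_sub_single_mul_diagonal [CommRing α] (d : n → α) (i j : n) (c : α) :
    diagonal d * single i j c - single i j c * diagonal d = (d i - d j) • single i j c := by
  ext a b
  by_cases h : i = a ∧ j = b
  · obtain ⟨rfl, rfl⟩ := h
    simp only [sub_apply, mul_single_apply_same, single_mul_apply_same, smul_apply,
      diagonal_apply_eq, single_apply_same, smul_eq_mul]
    ring
  · simp [h]

noncomputable def invConjAlgEquiv [CommRing α] (S : Matrix n n α) (hS : IsUnit S.det) :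
    Matrix n n α ≃ₐ[α] Matrix n n α :=
  MulSemiringAction.toAlgEquiv α _ (ConjAct.toConjAct (nonsingInvUnit S hS)⁻¹)

variable [CommRing α] {S : Matrix n n α} (hS : IsUnit S.det)

theorem invConjAlgEquiv_apply (M : Matrix n n α) : invConjAlgEquiv S hS M = S⁻¹ * M * S := by
  simp [invConjAlgEquiv, ConjAct.units_smul_def, nonsingInvUnit]

theorem invConjAlgEquiv_conj (M : Matrix n n α) : invConjAlgEquiv S hS (S * M * S⁻¹) = M := by
  rw [invConjAlgEquiv_apply, ← mul_assoc, nonsing_inv_mul_cancel_right _ _ hS,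
    nonsing_inv_mul_cancel_left _ _ hS]

end Matrix

/-- With `S * X * S⁻¹ = diag(λ₁,…,λ_N)` (pairwise distinct eigenvalues,
`S` invertible), `Δ` arbitrary, `B = S * Δ * S⁻¹`, `Δ₀ = S⁻¹ * B₀ * S` and
`Δ_{(i,j)} = S⁻¹ * (B i j • E_{ij}) * S`: for every polynomial `F` over `ℂ`, the map
`t ↦ F (X + t • Δ)` has derivative at `t = 0` equal to
`F′(X) * Δ₀ + ∑_{i≠j} r_{ij}⁻¹ • ((F(X) − F(X − r_{ij}•1)) * Δ_{(i,j)})`. -/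
theorem hasDerivAt_polynomial_perturbation (N : ℕ) (X Δ S : Matrix (Fin N) (Fin N) ℂ)
    (hS : IsUnit S.det) (lam : Fin N → ℂ)
    (hdiag : S * X * S⁻¹ = Matrix.diagonal lam)
    (hdistinct : ∀ i j : Fin N, i ≠ j → lam i ≠ lam j)
    (r : Fin N → Fin N → ℂ) (hr : ∀ i j, r i j = lam i - lam j)
    (B B₀ Δ₀ : Matrix (Fin N) (Fin N) ℂ)
    (hB : B = S * Δ * S⁻¹)
    (hB₀ : B₀ = Matrix.diagonal (fun i => B i i))
    (hΔ₀ : Δ₀ = S⁻¹ * B₀ * S)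
    (Δoff : Fin N → Fin N → Matrix (Fin N) (Fin N) ℂ)
    (hΔoff : ∀ i j, i ≠ j →
      Δoff i j = S⁻¹ * (B i j • Matrix.single i j (1 : ℂ)) * S)
    (F : Polynomial ℂ) :
    HasDerivAt (fun t : ℝ => aeval (X + t • Δ) F)
      (aeval X (derivative F) * Δ₀ +
        ∑ p ∈ Finset.univ.filter (fun p : Fin N × Fin N => p.1 ≠ p.2),
          (r p.1 p.2)⁻¹ •
            ((aeval X F - aeval (X - r p.1 p.2 • (1 : Matrix (Fin N) (Fin N) ℂ)) F) *
              Δoff p.1 p.2))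
      0 := by
  set φ := Matrix.invConjAlgEquiv S hS
  have hφ : ∀ M, φ M = S⁻¹ * M * S := Matrix.invConjAlgEquiv_apply hS
  have hX : X = φ (Matrix.diagonal lam) := by rw [← hdiag, Matrix.invConjAlgEquiv_conj]
  have hsplit : Δ = Δ₀ + ∑ p ∈ univ.filter (fun p : Fin N × Fin N => p.1 ≠ p.2), Δoff p.1 p.2 := by
    rw [← Matrix.invConjAlgEquiv_conj hS Δ, ← hB, B.eq_diagonal_add_sum_offDiag_single, map_add,
      map_sum, hΔ₀, hB₀, hφ]
    congr 1
    refine Finset.sum_congr rfl fun p hp => ?_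
    rw [hφ, hΔoff p.1 p.2 (Finset.mem_filter.mp hp).2]
  have hcomm : Commute X Δ₀ := by
    rw [hX, hΔ₀, ← hφ, hB₀]
    exact (Matrix.commute_diagonal _ _).map φ
  have heigen : ∀ p ∈ univ.filter (fun p : Fin N × Fin N => p.1 ≠ p.2),
      X * Δoff p.1 p.2 - Δoff p.1 p.2 * X = r p.1 p.2 • Δoff p.1 p.2 := by
    intro p hp
    rw [hΔoff p.1 p.2 (Finset.mem_filter.mp hp).2, ← hφ, hX, hr, ← map_mul, ← map_mul, ← map_sub,
      ← map_smul, Matrix.smul_single, Matrix.diagonal_mul_single_sub_single_mul_diagonal]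
  refine (hasDerivAt_aeval_add_smul F X Δ).congr_deriv ?_
  rw [hsplit, map_add, map_sum, derivAeval_of_commute hcomm]
  congr 1
  refine Finset.sum_congr rfl fun p hp => ?_
  have hr0 : r p.1 p.2 ≠ 0 := by
    rw [hr]
    exact sub_ne_zero.mpr (hdistinct _ _ (Finset.mem_filter.mp hp).2)
  rw [← smul_derivAeval_of_mul_sub_mul_eq_smul (heigen p hp), inv_smul_smul₀ hr0]
end

section
/- Let x be a quaternion whose imaginary part u = x − Re(x) is nonzero, let r² = ‖u‖² (so u² = −r²·1), and let δ be any quaternion. Define C = (1/(4r²))·(x·δ − δ·x). Then the quaternion δ₁ := δ − (C·x − x·C) commutes with x: x·δ₁ = δ₁·x. Consequently δ decomposes as δ = δ₁ + [C,x] with [δ₁, x] = 0 and [C,x] = δ − δ₁. -/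
/-!
Commutators with `x` only see its imaginary part `u`, and `u² = -r²` is central, which forces
`ad_x³ = -4r² ad_x` for `ad_x = ⁅x, ·⁆`. Since `δ₁ = δ + ⁅x, (4r²)⁻¹ • ⁅x, δ⁆⁆`, this gives
`⁅x, δ₁⁆ = ad_x δ + (4r²)⁻¹ • ad_x³ δ = 0`.
-/

open scoped Quaternion

theorem Ring.lie_add {A : Type*} [NonUnitalNonAssocRing A] (x a b : A) :
    ⁅x, a + b⁆ = ⁅x, a⁆ + ⁅x, b⁆ := by
  simp only [Ring.lie_def, mul_add, add_mul]
  abel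

theorem Ring.lie_smul {K A : Type*} [CommSemiring K] [Ring A] [Algebra K A] (t : K) (x y : A) :
    ⁅x, t • y⁆ = t • ⁅x, y⁆ := by
  rw [Ring.lie_def, Ring.lie_def, mul_smul_comm, smul_mul_assoc, smul_sub]

theorem lie_lie_lie_of_sq_mem_center {A : Type*} [Ring A] {u : A} (hu : u ^ 2 ∈ Set.center A)
    (y : A) : ⁅u, ⁅u, ⁅u, y⁆⁆⁆ = 4 * u ^ 2 * ⁅u, y⁆ := by
  have hy : y * (u * u) = u * u * y := by rw [← sq]; exact Semigroup.mem_center_iff.mp hu y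
  calc ⁅u, ⁅u, ⁅u, y⁆⁆⁆ = u * u * u * y - 3 * (u * u * y * u) + 3 * (u * (y * (u * u)))
        - y * (u * u) * u := by simp only [Ring.lie_def]; noncomm_ring
    _ = u * u * u * y - 3 * (u * u * y * u) + 3 * (u * (u * u * y)) - u * u * y * u := by
        rw [hy]
    _ = 4 * u ^ 2 * ⁅u, y⁆ := by rw [Ring.lie_def]; noncomm_ring

theorem lie_add_lie_inv_smul_lie_eq_zero {K A : Type*} [Field K] [Ring A] [Algebra K A]
    {x : A} {c : K} (hc : c ≠ 0) (hx : ∀ y : A, ⁅x, ⁅x, ⁅x, y⁆⁆⁆ = -c • ⁅x, y⁆) (δ : A) :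
    ⁅x, δ + ⁅x, c⁻¹ • ⁅x, δ⁆⁆⁆ = 0 := by
  rw [Ring.lie_add, Ring.lie_smul, Ring.lie_smul, hx, smul_smul, mul_neg, inv_mul_cancel₀ hc,
    neg_one_smul, add_neg_cancel]

namespace Quaternion

variable {R : Type*} [CommRing R]

theorem lie_im_left (x y : ℍ[R]) : ⁅x.im, y⁆ = ⁅x, y⁆ := by
  simp only [Ring.lie_def, ← sub_re_self x, sub_mul, mul_sub, coe_commutes]
  abel

theorem im_sq_mem_center (x : ℍ[R]) : x.im ^ 2 ∈ Set.center ℍ[R] := by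
  rw [im_sq, ← coe_neg, ← algebraMap_def]
  exact Set.algebraMap_mem_center _

theorem lie_lie_lie (x y : ℍ[R]) : ⁅x, ⁅x, ⁅x, y⁆⁆⁆ = -(4 * normSq x.im) • ⁅x, y⁆ := by
  simp only [← lie_im_left x]
  rw [lie_lie_lie_of_sq_mem_center (im_sq_mem_center x), im_sq, ← coe_mul_eq_smul]
  simp only [coe_mul, coe_neg, mul_neg, neg_mul, mul_assoc]
  norm_cast

end Quaternion

open Quaternion in
/-- Let `x` be a real quaternion with nonzero imaginary part
`u = x − Re x`, let `r² = ‖u‖²`, and let `δ` be any quaternion.  With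
`C = (1/(4 r²)) • (x*δ − δ*x)`, the quaternion `δ₁ = δ − (C*x − x*C)` commutes
with `x`, and consequently `δ = δ₁ + [C, x]`. -/
theorem quaternion_delta_decomposition (x δ : ℍ[ℝ])
    (u : ℍ[ℝ]) (hu : u = x - (x.re : ℍ[ℝ])) (hu0 : u ≠ 0)
    (r2 : ℝ) (hr2 : r2 = ‖u‖ ^ 2)
    (C : ℍ[ℝ]) (hC : C = (1 / (4 * r2)) • (x * δ - δ * x))
    (δ₁ : ℍ[ℝ]) (hδ₁ : δ₁ = δ - (C * x - x * C)) :
    x * δ₁ = δ₁ * x ∧ δ = δ₁ + (C * x - x * C) := by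
  rw [sub_re_self] at hu
  subst hu
  rw [sq, ← normSq_eq_norm_mul_self] at hr2
  have h4 : 4 * r2 ≠ 0 := mul_ne_zero four_ne_zero (hr2 ▸ normSq_eq_zero.not.mpr hu0)
  have hδ₁_lie : δ₁ = δ + ⁅x, (4 * r2)⁻¹ • ⁅x, δ⁆⁆ := by
    rw [hδ₁, hC, one_div, sub_eq_add_neg, neg_sub]
    rfl
  refine ⟨commute_iff_lie_eq.mpr ?_, by rw [hδ₁, sub_add_cancel]⟩
  have hx : ∀ y, ⁅x, ⁅x, ⁅x, y⁆⁆⁆ = -(4 * r2) • ⁅x, y⁆ := hr2 ▸ lie_lie_lie x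
  exact hδ₁_lie ▸ lie_add_lie_inv_smul_lie_eq_zero h4 hx δ
end
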